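/- Fix ρ > 0, let y_t ∈ Y, and let X ∈ Sⁿ. Let ν = proj_N(b − 𝒜X − ρ·y_t) and ỹ = y_t − (1/ρ)(b − ν − 𝒜X). Then ‖𝒜X − proj_K(𝒜X)‖ ≤ ρ·‖y_t − ỹ‖. -/

import Mathlib

open Matrix
open scoped RealInnerProductSpace

noncomputable def Aop {n m : ℕ} (A : Fin m → Matrix (Fin n) (Fin n) ℝ)
    (X : Matrix (Fin n) (Fin n) ℝ) : EuclideanSpace ℝ (Fin m) :=
  WithLp.toLp 2 (fun i => (A i * X).trace)

def Yset {m : ℕ} (I : Finset (Fin m)) : Set (EuclideanSpace ℝ (Fin m)) :=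
  {y | ∀ i ∈ I, 0 ≤ y i}

/-- Euclidean projection onto `N`. -/
noncomputable def projN {m : ℕ} (I : Finset (Fin m)) (z : EuclideanSpace ℝ (Fin m)) :
    EuclideanSpace ℝ (Fin m) :=
  WithLp.toLp 2 (fun i => if i ∈ I then max (z i) 0 else 0)

/-- Euclidean projection onto `K`. -/
noncomputable def projK {m : ℕ} (I : Finset (Fin m)) (b : EuclideanSpace ℝ (Fin m))
    (z : EuclideanSpace ℝ (Fin m)) : EuclideanSpace ℝ (Fin m) :=
  WithLp.toLp 2 (fun i => if i ∈ I then min (z i) (b i) else b i)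

/- Since `b - N ⊆ K`, the vector `b - ν` is a point of `K`, so its distance to `𝒜X` bounds the
distance `‖𝒜X - proj_K(𝒜X)‖`; and `b - ν - 𝒜X` is exactly `ρ (y_t - ỹ)`. -/

theorem EuclideanSpace.norm_le_norm_of_abs_le {ι : Type*} [Fintype ι]
    {x y : EuclideanSpace ℝ ι} (h : ∀ i, |x i| ≤ |y i|) : ‖x‖ ≤ ‖y‖ := by
  rw [EuclideanSpace.norm_eq, EuclideanSpace.norm_eq]
  gcongr with i
  simpa only [Real.norm_eq_abs] using h i

theorem abs_sub_min_le_abs_sub {x b w : ℝ} (hw : w ≤ b) : |x - min x b| ≤ |x - w| := by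
  rcases le_total x b with hxb | hbx
  · simp [min_eq_left hxb]
  · rw [min_eq_right hbx, abs_of_nonneg (sub_nonneg.2 hbx), abs_of_nonneg (by linarith)]
    linarith

section Projections

variable {m : ℕ} (I : Finset (Fin m))

def Nset : Set (EuclideanSpace ℝ (Fin m)) :=
  {ν | (∀ i ∈ I, 0 ≤ ν i) ∧ ∀ i ∉ I, ν i = 0}

def Kset (b : EuclideanSpace ℝ (Fin m)) : Set (EuclideanSpace ℝ (Fin m)) :=
  {w | (∀ i ∈ I, w i ≤ b i) ∧ ∀ i ∉ I, w i = b i}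

theorem projN_mem_Nset (z : EuclideanSpace ℝ (Fin m)) : projN I z ∈ Nset I :=
  ⟨fun i hi => by simp [projN, hi], fun i hi => by simp [projN, hi]⟩

theorem sub_mem_Kset_of_mem_Nset (b : EuclideanSpace ℝ (Fin m)) {ν : EuclideanSpace ℝ (Fin m)}
    (hν : ν ∈ Nset I) : b - ν ∈ Kset I b :=
  ⟨fun i hi => by simpa using hν.1 i hi, fun i hi => by simp [hν.2 i hi]⟩

theorem norm_sub_projK_le {b w : EuclideanSpace ℝ (Fin m)} (hw : w ∈ Kset I b)
    (z : EuclideanSpace ℝ (Fin m)) : ‖z - projK I b z‖ ≤ ‖z - w‖ := by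
  refine EuclideanSpace.norm_le_norm_of_abs_le fun i => ?_
  by_cases hi : i ∈ I
  · simpa [projK, hi] using abs_sub_min_le_abs_sub (x := z i) (hw.1 i hi)
  · simp [projK, hi, hw.2 i hi]

end Projections

theorem stmt12_general {n m : ℕ} (A : Fin m → Matrix (Fin n) (Fin n) ℝ)
    (b : EuclideanSpace ℝ (Fin m)) (I : Finset (Fin m))
    (ρ : ℝ) (hρ : 0 < ρ)
    (yt : EuclideanSpace ℝ (Fin m))
    (X : Matrix (Fin n) (Fin n) ℝ)
    (ν ytilde : EuclideanSpace ℝ (Fin m))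
    (hν : ν = projN I (b - Aop A X - ρ • yt))
    (hyt' : ytilde = yt - (1 / ρ) • (b - ν - Aop A X)) :
    ‖Aop A X - projK I b (Aop A X)‖ ≤ ρ * ‖yt - ytilde‖ := by
  have hK : b - ν ∈ Kset I b := sub_mem_Kset_of_mem_Nset I b (hν ▸ projN_mem_Nset I _)
  have hstep : ρ • (yt - ytilde) = b - ν - Aop A X := by
    rw [hyt', sub_sub_cancel, smul_smul, mul_one_div_cancel hρ.ne', one_smul]
  calc ‖Aop A X - projK I b (Aop A X)‖
      ≤ ‖Aop A X - (b - ν)‖ := norm_sub_projK_le I hK _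
    _ = ‖ρ • (yt - ytilde)‖ := by rw [hstep, norm_sub_rev, sub_right_comm]
    _ = ρ * ‖yt - ytilde‖ := by rw [norm_smul, Real.norm_of_nonneg hρ.le]

/-- with `ν = proj_N(b − 𝒜X − ρ·y_t)` and `ỹ = y_t − (1/ρ)(b − ν − 𝒜X)`,
one has `‖𝒜X − proj_K(𝒜X)‖ ≤ ρ·‖y_t − ỹ‖`. -/
theorem stmt12 {n m : ℕ} (A : Fin m → Matrix (Fin n) (Fin n) ℝ)
    (b : EuclideanSpace ℝ (Fin m)) (I : Finset (Fin m))
    (ρ : ℝ) (hρ : 0 < ρ)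
    (yt : EuclideanSpace ℝ (Fin m)) (hyt : yt ∈ Yset I)
    (X : Matrix (Fin n) (Fin n) ℝ)
    (ν ytilde : EuclideanSpace ℝ (Fin m))
    (hν : ν = projN I (b - Aop A X - ρ • yt))
    (hyt' : ytilde = yt - (1 / ρ) • (b - ν - Aop A X)) :
    ‖Aop A X - projK I b (Aop A X)‖ ≤ ρ * ‖yt - ytilde‖ :=
  stmt12_general A b I ρ hρ yt X ν ytilde hν hyt'
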